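/- For every left-invariant vector field V = a e₁ + b e₂ + c e₃ + d e₄ (a,b,c,d ∈ ℝ), one has ∇*∇V = ((A+D)² + 4B²)(c+d)(e₃ − e₄) and Σ_{i=1}^{4} εᵢ R(∇_{eᵢ}V, V)eᵢ = 0. Consequently, if (A+D)² + 4B² ≠ 0, then V defines a harmonic map (i.e., ∇*∇V = 0 and Σᵢ εᵢ R(∇_{eᵢ}V, V)eᵢ = 0) if and only if d = −c. -/

import Mathlib

/-!
The Koszul formula determines `∇` on the basis `u`: since `⟨·,·⟩` pairs `u₁, u₂, u₃, u₄` with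
`u₁, u₂, u₄, u₃`, every vector is recovered from its products with the basis, which gives the
Christoffel symbols `∇_{uᵢ} uⱼ` in closed form. Everything else is bilinear in these symbols and
the structure constants, so `∇*∇V` and `Σ εᵢ R(∇_{eᵢ}V, V)eᵢ` are explicit polynomial expressions
in the coordinates of `V`. Writing `[u₁, u₂] = k u₃`, the trace vanishes identically, while
`∇*∇V = ((A + D)² + 4B² + k²)/2 · (c + d)(e₃ - e₄)` with `e₃ - e₄ = -u₃ ≠ 0`, and
`k² = (A + D)² + 4B²`.
-/

open Module

theorem LinearMap.apply_self_eq_zero_of_antisymm {K M N : Type*} [Field K] [CharZero K]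
    [AddCommGroup M] [AddCommGroup N] [Module K M] [Module K N]
    (f : M →ₗ[K] M →ₗ[K] N) (h : ∀ x y, f x y = -f y x) (x : M) : f x x = 0 := by
  have two_smul_eq : (2 : K) • f x x = 0 := by
    rw [two_smul]
    nth_rewrite 2 [h]
    exact add_neg_cancel _
  exact (smul_eq_zero.mp two_smul_eq).resolve_left two_ne_zero

theorem Module.Basis.eq_sum_smul_of_gram_perm {ι R M : Type*} [Fintype ι] [DecidableEq ι]
    [CommRing R] [AddCommGroup M] [Module R M] (u : Basis ι R M) (g : M →ₗ[R] M →ₗ[R] R)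
    (σ : Equiv.Perm ι) (hg : ∀ i j, g (u i) (u j) = if j = σ i then 1 else 0) (w : M) :
    w = ∑ i, g w (u (σ i)) • u i := by
  have coord : ∀ i, g w (u (σ i)) = u.repr w i := by
    intro i
    calc g w (u (σ i)) = g (∑ j, u.repr w j • u j) (u (σ i)) := by rw [u.sum_repr]
      _ = ∑ j, u.repr w j * if σ i = σ j then 1 else 0 := by
        simp only [map_sum, map_smul, LinearMap.sum_apply, LinearMap.smul_apply, hg, smul_eq_mul]
      _ = u.repr w i := by simp [σ.injective.eq_iff]
  simp only [coord, u.sum_repr]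

theorem nabla_eq_sum_koszul {ι M : Type*} [Fintype ι] [DecidableEq ι] [AddCommGroup M]
    [Module ℝ M] (u : Basis ι ℝ M) (g : M →ₗ[ℝ] M →ₗ[ℝ] ℝ) (σ : Equiv.Perm ι)
    (hg : ∀ i j, g (u i) (u j) = if j = σ i then 1 else 0) (lie nabla : M →ₗ[ℝ] M →ₗ[ℝ] M)
    (hK : ∀ X Y Z, 2 * g (nabla X Y) Z = g (lie X Y) Z - g (lie Y Z) X + g (lie Z X) Y)
    (X Y : M) :
    nabla X Y = ∑ i, ((g (lie X Y) (u (σ i)) - g (lie Y (u (σ i))) X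
      + g (lie (u (σ i)) X) Y) / 2) • u i := by
  rw [u.eq_sum_smul_of_gram_perm g σ hg (nabla X Y)]
  congr! with i
  rw [← hK]
  ring

section Harmonic

variable {G : Type*} [AddCommGroup G] [Module ℝ G] {ι : Type*} [Fintype ι]

def roughLaplacian (nabla : G →ₗ[ℝ] G →ₗ[ℝ] G) (eps : ι → ℝ) (e : ι → G) (V : G) : G :=
  ∑ i, eps i • (nabla (e i) (nabla (e i) V) - nabla (nabla (e i) (e i)) V)

def curvature (lie nabla : G →ₗ[ℝ] G →ₗ[ℝ] G) (X Y Z : G) : G :=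
  nabla (lie X Y) Z - nabla X (nabla Y Z) + nabla Y (nabla X Z)

def curvatureTrace (lie nabla : G →ₗ[ℝ] G →ₗ[ℝ] G) (eps : ι → ℝ) (e : ι → G) (V : G) : G :=
  ∑ i, eps i • curvature lie nabla (nabla (e i) V) V (e i)

end Harmonic

section FourDimensional

variable {G : Type*} [AddCommGroup G] [Module ℝ G]

/-- `k` stands for `ε √((A + D)² + 4B²)`. -/
def lieTable (u : Fin 4 → G) (k A B C D E : ℝ) : Fin 4 → Fin 4 → G :=
  ![![0, k • u 2, 0, (-B) • u 0 + D • u 1 + E • u 2],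
    ![-(k • u 2), 0, 0, A • u 0 + B • u 1 + C • u 2],
    ![0, 0, 0, 0],
    ![-((-B) • u 0 + D • u 1 + E • u 2), -(A • u 0 + B • u 1 + C • u 2), 0, 0]]

noncomputable def christoffel (u : Fin 4 → G) (k A B C D E : ℝ) : Fin 4 → Fin 4 → G :=
  ![![B • u 2, ((k - A - D) / 2) • u 2, 0, (-B) • u 0 + ((A + D - k) / 2) • u 1],
    ![((-k - A - D) / 2) • u 2, (-B) • u 2, 0, ((k + A + D) / 2) • u 0 + B • u 1],
    ![0, 0, 0, 0],
    ![((A - D - k) / 2) • u 1 + (-E) • u 2, ((k + D - A) / 2) • u 0 + (-C) • u 2, 0,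
      E • u 0 + C • u 1]]

noncomputable def frame (u : Fin 4 → G) : Fin 4 → G :=
  ![u 0, u 1, (-(1 / 2 : ℝ)) • u 2 + u 3, (1 / 2 : ℝ) • u 2 + u 3]

def frameSign : Fin 4 → ℝ := fun i => if i = 2 then -1 else 1

theorem lie_basis_eq_lieTable (u : Basis (Fin 4) ℝ G) (lie : G →ₗ[ℝ] G →ₗ[ℝ] G)
    (k A B C D E : ℝ) (hanti : ∀ X Y : G, lie X Y = -lie Y X)
    (h12 : lie (u 0) (u 1) = k • u 2) (h13 : lie (u 0) (u 2) = 0)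
    (h14 : lie (u 0) (u 3) = (-B) • u 0 + D • u 1 + E • u 2) (h23 : lie (u 1) (u 2) = 0)
    (h24 : lie (u 1) (u 3) = A • u 0 + B • u 1 + C • u 2) (h34 : lie (u 2) (u 3) = 0)
    (i j : Fin 4) : lie (u i) (u j) = lieTable u k A B C D E i j := by
  fin_cases i <;> fin_cases j <;>
    simp [lieTable, lie.apply_self_eq_zero_of_antisymm hanti, hanti (u 1) (u 0),
      hanti (u 2) (u 0), hanti (u 3) (u 0), hanti (u 2) (u 1), hanti (u 3) (u 1),
      hanti (u 3) (u 2), h12, h13, h14, h23, h24, h34]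

theorem nabla_basis_eq_christoffel (u : Basis (Fin 4) ℝ G) (lie nabla : G →ₗ[ℝ] G →ₗ[ℝ] G)
    (g : G →ₗ[ℝ] G →ₗ[ℝ] ℝ) (k A B C D E : ℝ)
    (hlie : ∀ i j, lie (u i) (u j) = lieTable u k A B C D E i j)
    (hg : ∀ i j : Fin 4, g (u i) (u j) =
      if (i = 0 ∧ j = 0) ∨ (i = 1 ∧ j = 1) ∨ (i = 2 ∧ j = 3) ∨ (i = 3 ∧ j = 2) then 1 else 0)
    (hK : ∀ X Y Z, 2 * g (nabla X Y) Z = g (lie X Y) Z - g (lie Y Z) X + g (lie Z X) Y)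
    (i j : Fin 4) : nabla (u i) (u j) = christoffel u k A B C D E i j := by
  have hg_swap : ∀ i j, g (u i) (u j) = if j = Equiv.swap 2 3 i then 1 else 0 := by
    intro i j
    fin_cases i <;> fin_cases j <;> simp [hg, Equiv.swap_apply_def]
  rw [nabla_eq_sum_koszul u g _ hg_swap lie nabla hK, Fin.sum_univ_four]
  fin_cases i <;> fin_cases j <;>
    simp [hlie, lieTable, christoffel, hg, Equiv.swap_apply_def] <;> module

variable (u : Fin 4 → G) (lie nabla : G →ₗ[ℝ] G →ₗ[ℝ] G) (k A B C D E : ℝ)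

theorem roughLaplacian_frame (hnabla : ∀ i j, nabla (u i) (u j) = christoffel u k A B C D E i j)
    (a b c d : ℝ) :
    roughLaplacian nabla frameSign (frame u)
        (a • frame u 0 + b • frame u 1 + c • frame u 2 + d • frame u 3)
      = (((A + D) ^ 2 + 4 * B ^ 2 + k ^ 2) / 2 * (c + d)) • (frame u 2 - frame u 3) := by
  simp only [roughLaplacian, Fin.sum_univ_four, frameSign, frame, hnabla, christoffel,
    Fin.isValue, Fin.reduceEq, ↓reduceIte, Matrix.cons_val, Matrix.cons_val_zero,
    Matrix.cons_val_one, map_add, map_smul, map_zero, LinearMap.add_apply, LinearMap.smul_apply,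
    LinearMap.zero_apply]
  match_scalars <;> ring

theorem curvatureTrace_frame (hlie : ∀ i j, lie (u i) (u j) = lieTable u k A B C D E i j)
    (hnabla : ∀ i j, nabla (u i) (u j) = christoffel u k A B C D E i j) (a b c d : ℝ) :
    curvatureTrace lie nabla frameSign (frame u)
      (a • frame u 0 + b • frame u 1 + c • frame u 2 + d • frame u 3) = 0 := by
  simp only [curvatureTrace, curvature, Fin.sum_univ_four, frameSign, frame, hnabla, christoffel,
    hlie, lieTable, Fin.isValue, Fin.reduceEq, ↓reduceIte, Matrix.cons_val, Matrix.cons_val_zero,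
    Matrix.cons_val_one, map_add, map_smul, map_neg, map_zero, LinearMap.add_apply,
    LinearMap.smul_apply, LinearMap.neg_apply, LinearMap.zero_apply]
  match_scalars <;> ring

end FourDimensional

theorem stmt_14_general {G : Type*} [AddCommGroup G] [Module ℝ G]
    (u : Module.Basis (Fin 4) ℝ G)
    (lie : G →ₗ[ℝ] G →ₗ[ℝ] G)
    (g : G →ₗ[ℝ] G →ₗ[ℝ] ℝ)
    (nabla : G →ₗ[ℝ] G →ₗ[ℝ] G)
    (A B C D E ε : ℝ) (hε : ε = 1 ∨ ε = -1)
    (hanti : ∀ X Y : G, lie X Y = - lie Y X)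
    (h12 : lie (u 0) (u 1) = (ε * Real.sqrt ((A + D) ^ 2 + 4 * B ^ 2)) • u 2)
    (h13 : lie (u 0) (u 2) = 0)
    (h14 : lie (u 0) (u 3) = (-B) • u 0 + D • u 1 + E • u 2)
    (h23 : lie (u 1) (u 2) = 0)
    (h24 : lie (u 1) (u 3) = A • u 0 + B • u 1 + C • u 2)
    (h34 : lie (u 2) (u 3) = 0)
    (hg : ∀ i j : Fin 4, g (u i) (u j) =
      if (i = 0 ∧ j = 0) ∨ (i = 1 ∧ j = 1) ∨ (i = 2 ∧ j = 3) ∨ (i = 3 ∧ j = 2) then (1 : ℝ) else 0)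
    (hK : ∀ X Y Z : G, 2 * g (nabla X Y) Z = g (lie X Y) Z - g (lie Y Z) X + g (lie Z X) Y) :
    (let eps : Fin 4 → ℝ := fun i => if i = (2 : Fin 4) then (-1 : ℝ) else 1
     let ef : Fin 4 → G := ![u 0, u 1, (-(1/2 : ℝ)) • u 2 + u 3, ((1/2 : ℝ)) • u 2 + u 3]
     let lap : G → G := fun V : G => ∑ i : Fin 4, eps i • (nabla (ef i) (nabla (ef i) V) - nabla (nabla (ef i) (ef i)) V)
     let tr : G → G := fun V : G => ∑ i : Fin 4, eps i • (nabla (lie (nabla (ef i) V) V) (ef i) - nabla (nabla (ef i) V) (nabla V (ef i)) + nabla V (nabla (nabla (ef i) V) (ef i)))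
     (∀ a b c d : ℝ,
        lap (a • ef 0 + b • ef 1 + c • ef 2 + d • ef 3)
            = (((A + D) ^ 2 + 4 * B ^ 2) * (c + d)) • (ef 2 - ef 3) ∧
        tr (a • ef 0 + b • ef 1 + c • ef 2 + d • ef 3) = 0) ∧
     ((A + D) ^ 2 + 4 * B ^ 2 ≠ 0 →
        ∀ a b c d : ℝ,
          ((lap (a • ef 0 + b • ef 1 + c • ef 2 + d • ef 3) = 0 ∧
            tr (a • ef 0 + b • ef 1 + c • ef 2 + d • ef 3) = 0) ↔ d = -c))) := by
  set k := ε * Real.sqrt ((A + D) ^ 2 + 4 * B ^ 2) with hk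
  have hk2 : k ^ 2 = (A + D) ^ 2 + 4 * B ^ 2 := by
    rw [hk, mul_pow, Real.sq_sqrt (by positivity)]
    rcases hε with rfl | rfl <;> ring
  have hlie := lie_basis_eq_lieTable u lie k A B C D E hanti h12 h13 h14 h23 h24 h34
  have hnabla := nabla_basis_eq_christoffel u lie nabla g k A B C D E hlie hg hK
  have hlap (a b c d : ℝ) :
      roughLaplacian nabla frameSign (frame u)
          (a • frame u 0 + b • frame u 1 + c • frame u 2 + d • frame u 3)
        = (((A + D) ^ 2 + 4 * B ^ 2) * (c + d)) • (frame u 2 - frame u 3) := by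
    rw [roughLaplacian_frame u nabla k A B C D E hnabla, hk2]
    congr 1
    ring
  have htr := curvatureTrace_frame u lie nabla k A B C D E hlie hnabla
  refine ⟨fun a b c d => ⟨hlap a b c d, htr a b c d⟩, fun hne a b c d => ?_⟩
  have hframe : frame u 2 - frame u 3 ≠ 0 := by
    have : frame u 2 - frame u 3 = -u 2 := by
      change (-(1 / 2 : ℝ)) • u 2 + u 3 - ((1 / 2 : ℝ) • u 2 + u 3) = -u 2
      module
    rw [this, neg_ne_zero]
    exact u.ne_zero 2
  refine (and_iff_left (htr a b c d)).trans ((Eq.congr_left (hlap a b c d)).trans ?_)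
  rw [smul_eq_zero, mul_eq_zero]
  simp only [hne, hframe, false_or, or_false]
  constructor <;> intro h <;> linarith

theorem stmt_14 {G : Type*} [AddCommGroup G] [Module ℝ G]
    (u : Module.Basis (Fin 4) ℝ G)
    (lie : G →ₗ[ℝ] G →ₗ[ℝ] G)
    (g : G →ₗ[ℝ] G →ₗ[ℝ] ℝ)
    (nabla : G →ₗ[ℝ] G →ₗ[ℝ] G)
    (A B C D E ε : ℝ) (hε : ε = 1 ∨ ε = -1)
    (hanti : ∀ X Y : G, lie X Y = - lie Y X)
    (h12 : lie (u 0) (u 1) = (ε * Real.sqrt ((A + D) ^ 2 + 4 * B ^ 2)) • u 2)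
    (h13 : lie (u 0) (u 2) = 0)
    (h14 : lie (u 0) (u 3) = (-B) • u 0 + D • u 1 + E • u 2)
    (h23 : lie (u 1) (u 2) = 0)
    (h24 : lie (u 1) (u 3) = A • u 0 + B • u 1 + C • u 2)
    (h34 : lie (u 2) (u 3) = 0)
    (hg : ∀ i j : Fin 4, g (u i) (u j) =
      if (i = 0 ∧ j = 0) ∨ (i = 1 ∧ j = 1) ∨ (i = 2 ∧ j = 3) ∨ (i = 3 ∧ j = 2) then (1 : ℝ) else 0)
    (hgsymm : ∀ X Y : G, g X Y = g Y X)
    (hK : ∀ X Y Z : G, 2 * g (nabla X Y) Z = g (lie X Y) Z - g (lie Y Z) X + g (lie Z X) Y) :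
    (let eps : Fin 4 → ℝ := fun i => if i = (2 : Fin 4) then (-1 : ℝ) else 1
     let ef : Fin 4 → G := ![u 0, u 1, (-(1/2 : ℝ)) • u 2 + u 3, ((1/2 : ℝ)) • u 2 + u 3]
     let lap : G → G := fun V : G => ∑ i : Fin 4, eps i • (nabla (ef i) (nabla (ef i) V) - nabla (nabla (ef i) (ef i)) V)
     let tr : G → G := fun V : G => ∑ i : Fin 4, eps i • (nabla (lie (nabla (ef i) V) V) (ef i) - nabla (nabla (ef i) V) (nabla V (ef i)) + nabla V (nabla (nabla (ef i) V) (ef i)))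
     (∀ a b c d : ℝ,
        lap (a • ef 0 + b • ef 1 + c • ef 2 + d • ef 3)
            = (((A + D) ^ 2 + 4 * B ^ 2) * (c + d)) • (ef 2 - ef 3) ∧
        tr (a • ef 0 + b • ef 1 + c • ef 2 + d • ef 3) = 0) ∧
     ((A + D) ^ 2 + 4 * B ^ 2 ≠ 0 →
        ∀ a b c d : ℝ,
          ((lap (a • ef 0 + b • ef 1 + c • ef 2 + d • ef 3) = 0 ∧
            tr (a • ef 0 + b • ef 1 + c • ef 2 + d • ef 3) = 0) ↔ d = -c))) :=
  stmt_14_general u lie g nabla A B C D E ε hε hanti h12 h13 h14 h23 h24 h34 hg hK
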